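/- arXiv:2306.13216 — 2 statements merged into one kernel-verified Lean document; each statement's English description precedes it below -/
import Mathlib

section
/- The uncertainty coefficient of an added feature X given the existing feature set F equals 1 if and only if the dispersal ratio upon adding X equals 1; that is, U(X|F) = 1 ⟺ Disperse(S, X, P) = 1. -/
open Finset

/-- Empirical Shannon entropy (base 2) of a feature `Y` on the finite population `P`. -/
noncomputable def empEntropy {P α : Type*} [Fintype P] [DecidableEq α] (Y : P → α) : ℝ :=
  -∑ a ∈ Finset.univ.image Y,
      (((Finset.univ.filter (fun i => Y i = a)).card : ℝ) / (Fintype.card P : ℝ)) *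
        Real.logb 2 (((Finset.univ.filter (fun i => Y i = a)).card : ℝ) / (Fintype.card P : ℝ))

/-- Number of nonempty bins of the histogram of feature `Y` on `P`
    (the number of distinct observed values of `Y`). -/
def numBins {P α : Type*} [Fintype P] [DecidableEq α] (Y : P → α) : ℕ :=
  (Finset.univ.image Y).card

/-- Dispersal ratio: nonempty bins of the joint histogram of `(F, X)` divided by
    nonempty bins of the histogram of `F`. -/
noncomputable def disperse {P A B : Type*} [Fintype P] [DecidableEq A] [DecidableEq B]
    (F : P → A) (X : P → B) : ℝ :=
  (numBins (fun i => (F i, X i)) : ℝ) / (numBins F : ℝ)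

/-- Uncertainty coefficient `U(X|F) = (H(X) - H(X|F)) / H(X)` with
    `H(X|F) = H(X,F) - H(F)`. -/
noncomputable def uncertaintyCoeff {P A B : Type*} [Fintype P] [DecidableEq A] [DecidableEq B]
    (F : P → A) (X : P → B) : ℝ :=
  (empEntropy X - (empEntropy (fun i => (F i, X i)) - empEntropy F)) / empEntropy X

/-!
Both conditions say that `X` is a function of `F` on `P`. Averaging over records instead of
over values, `H(Y)` is the mean of `-log₂` of the relative size of the `Y`-fibre through a
record. The `(F, X)`-fibre through a record lies inside its `F`-fibre, so each term can only grow,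
and `H(F, X) = H(F)` exactly when every `(F, X)`-fibre is a full `F`-fibre. On the bin side,
`Prod.fst` maps the joint bins onto the bins of `F`, and it is injective exactly in that case.
-/

section

variable {P A B α : Type*} [Fintype P] [DecidableEq A] [DecidableEq B] [DecidableEq α]

theorem empEntropy_eq_sum_logb (Y : P → α) :
    empEntropy Y =
      -(∑ i, Real.logb 2 (#{j | Y j = Y i} / Fintype.card P)) / Fintype.card P := by
  rw [empEntropy, Finset.sum_comp (fun a => Real.logb 2 (#{j | Y j = a} / Fintype.card P)) Y,
    neg_div, Finset.sum_div]
  simp only [nsmul_eq_mul, mul_div_right_comm]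

theorem nonempty_of_empEntropy_ne_zero {Y : P → α} (h : empEntropy Y ≠ 0) : Nonempty P := by
  contrapose! h
  simp [empEntropy_eq_sum_logb]

theorem card_filter_eq_pos (Y : P → α) (i : P) : 0 < #{j | Y j = Y i} :=
  Finset.card_pos.mpr ⟨i, by simp⟩

theorem filter_pair_subset (F : P → A) (X : P → B) (i : P) :
    ({j | (F j, X j) = (F i, X i)} : Finset P) ⊆ ({j | F j = F i} : Finset P) :=
  fun j hj => by simp_all

theorem card_filter_pair_eq_iff (F : P → A) (X : P → B) (i : P) :
    #{j | (F j, X j) = (F i, X i)} = #{j | F j = F i} ↔ ∀ j, F j = F i → X j = X i := by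
  have hsub := filter_pair_subset F X i
  rw [(Finset.card_le_card hsub).ge_iff_eq.symm.trans (Finset.eq_iff_card_le_of_subset hsub)]
  simp +contextual [Finset.ext_iff]

theorem logb_card_filter_pair_le (F : P → A) (X : P → B) (i : P) :
    Real.logb 2 (#{j | (F j, X j) = (F i, X i)} / Fintype.card P) ≤
      Real.logb 2 (#{j | F j = F i} / Fintype.card P) := by
  have hn : (0 : ℝ) < Fintype.card P := by exact_mod_cast Fintype.card_pos_iff.mpr ⟨i⟩
  exact Real.logb_le_logb_of_le one_lt_two
    (div_pos (Nat.cast_pos.mpr (card_filter_eq_pos _ i)) hn) (div_le_div_of_nonneg_right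
      (Nat.cast_le.mpr (Finset.card_le_card (filter_pair_subset F X i))) hn.le)

theorem empEntropy_pair_eq_iff [Nonempty P] (F : P → A) (X : P → B) :
    empEntropy (fun i => (F i, X i)) = empEntropy F ↔ X.FactorsThrough F := by
  have hn : (0 : ℝ) < Fintype.card P := by exact_mod_cast Fintype.card_pos
  rw [empEntropy_eq_sum_logb, empEntropy_eq_sum_logb, div_left_inj' hn.ne', neg_inj,
    Finset.sum_eq_sum_iff_of_le fun i _ => logb_card_filter_pair_le F X i]
  have hlogb : ∀ i, Real.logb 2 (#{j | (F j, X j) = (F i, X i)} / Fintype.card P) =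
      Real.logb 2 (#{j | F j = F i} / Fintype.card P) ↔ ∀ j, F j = F i → X j = X i := by
    intro i
    rw [(Real.logb_injOn_pos one_lt_two).eq_iff
      (div_pos (Nat.cast_pos.mpr (card_filter_eq_pos _ i)) hn)
      (div_pos (Nat.cast_pos.mpr (card_filter_eq_pos _ i)) hn), div_left_inj' hn.ne', Nat.cast_inj,
      card_filter_pair_eq_iff]
  simp only [Finset.mem_univ, true_implies, hlogb]
  exact ⟨fun h a b hab => h b a hab, fun h i j hj => h hj⟩

theorem numBins_pair_eq_iff (F : P → A) (X : P → B) :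
    numBins (fun i => (F i, X i)) = numBins F ↔ X.FactorsThrough F := by
  have himage : univ.image F = (univ.image fun i => (F i, X i)).image Prod.fst := by
    rw [Finset.image_image]; rfl
  rw [numBins, numBins, himage, eq_comm, Finset.card_image_iff]
  simp +contextual [Set.InjOn, Function.FactorsThrough]

theorem uncertaintyCoeff_eq_one_iff (F : P → A) {X : P → B} (hX : empEntropy X ≠ 0) :
    uncertaintyCoeff F X = 1 ↔ empEntropy (fun i => (F i, X i)) = empEntropy F := by
  rw [uncertaintyCoeff, div_eq_one_iff_eq hX]
  constructor <;> intro h <;> linarith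

theorem disperse_eq_one_iff [Nonempty P] (F : P → A) (X : P → B) :
    disperse F X = 1 ↔ numBins (fun i => (F i, X i)) = numBins F := by
  have hF : numBins F ≠ 0 := (Finset.univ_nonempty.image F).card_pos.ne'
  rw [disperse, div_eq_one_iff_eq (Nat.cast_ne_zero.mpr hF), Nat.cast_inj]

end

theorem uncertainty_one_iff_disperse_one_general
    {P A B : Type*} [Fintype P] [DecidableEq A] [DecidableEq B]
    (F : P → A) (X : P → B) (hX : 0 < empEntropy X) :
    uncertaintyCoeff F X = 1 ↔ disperse F X = 1 := by
  have : Nonempty P := nonempty_of_empEntropy_ne_zero hX.ne'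
  rw [uncertaintyCoeff_eq_one_iff F hX.ne', disperse_eq_one_iff, empEntropy_pair_eq_iff,
    numBins_pair_eq_iff]

/-- Lemma 2.1: `U(X|F) = 1 ↔ Disperse(S, X, P) = 1`. -/
theorem uncertainty_one_iff_disperse_one
    {P A B : Type*} [Fintype P] [Nonempty P] [DecidableEq A] [DecidableEq B]
    (F : P → A) (X : P → B) (hX : 0 < empEntropy X) :
    uncertaintyCoeff F X = 1 ↔ disperse F X = 1 :=
  uncertainty_one_iff_disperse_one_general F X hX
end

section
/- If the uncertainty coefficient of an added feature X given the existing feature set F equals 0 (i.e., X is empirically independent of F), then the dispersal ratio upon adding X attains its maximum value |Range(X)|, the number of distinct values of X observed in P; that is, U(X|F) = 0 ⟹ Disperse(S, X, P) = |Range(X)|. -/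
open Finset

/-!
Zero uncertainty coefficient means zero empirical mutual information
`I = H(F) + H(X) - H(F,X)`, which is the population average of
`log₂ (p(F,X) / (p(F) p(X)))`. Applying `log x ≤ x - 1` termwise gives
`I · log 2 ≥ 1 - ∑ p(a) p(b)`, the sum running over the observed joint values `(a, b)`.
The products `p(a) p(b)` over all of `Range F × Range X` are positive and sum to `1`, so
`I = 0` forces every pair in `Range F × Range X` to be observed: the joint histogram has
`|Range F| · |Range X|` nonempty bins.
-/

open Real

theorem Finset.eq_of_subset_of_sum_le_sum {ι M : Type*} [AddCommMonoid M] [PartialOrder M]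
    [IsOrderedCancelAddMonoid M] {s t : Finset ι} {f : ι → M} (hst : s ⊆ t)
    (hf : ∀ i ∈ t, 0 < f i) (hsum : ∑ i ∈ t, f i ≤ ∑ i ∈ s, f i) : s = t := by
  by_contra hne
  obtain ⟨i, hit, his⟩ := exists_of_ssubset (ssubset_of_subset_of_ne hst hne)
  exact (sum_lt_sum_of_subset hst hit his (hf i hit) fun j hj _ => (hf j hj).le).not_ge hsum

noncomputable def empProb {P α : Type*} [Fintype P] [DecidableEq α] (Y : P → α) (a : α) : ℝ :=
  (#{i | Y i = a} : ℝ) / Fintype.card P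

section EmpiricalDistribution

variable {P α : Type*} [Fintype P] [DecidableEq α]

theorem empProb_pos (Y : P → α) (i : P) : 0 < empProb Y (Y i) :=
  div_pos (Nat.cast_pos.2 (card_pos.2 ⟨i, by simp⟩)) (Nat.cast_pos.2 (Fintype.card_pos_iff.2 ⟨i⟩))

theorem sum_image_empProb_mul (Y : P → α) (φ : α → ℝ) :
    ∑ a ∈ univ.image Y, empProb Y a * φ a = (∑ i, φ (Y i)) / Fintype.card P := by
  rw [sum_comp, sum_div]
  refine sum_congr rfl fun a _ => ?_
  rw [empProb, nsmul_eq_mul]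
  ring

theorem sum_image_empProb [Nonempty P] (Y : P → α) : ∑ a ∈ univ.image Y, empProb Y a = 1 := by
  have hcard : (Fintype.card P : ℝ) ≠ 0 := Nat.cast_ne_zero.2 Fintype.card_ne_zero
  simpa [div_self hcard] using sum_image_empProb_mul Y (fun _ => 1)

theorem empEntropy_eq_neg_sum_logb_div (Y : P → α) :
    empEntropy Y = -(∑ i, logb 2 (empProb Y (Y i))) / Fintype.card P := by
  rw [neg_div, ← sum_image_empProb_mul Y (fun a => logb 2 (empProb Y a))]
  rfl

theorem one_sub_sum_le_sum_log_empProb_div [Nonempty P] (Y : P → α) (p : α → ℝ)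
    (hp : ∀ i, 0 < p (Y i)) :
    1 - ∑ a ∈ univ.image Y, p a
      ≤ (∑ i, log (empProb Y (Y i) / p (Y i))) / Fintype.card P := by
  have hsum : ∑ a ∈ univ.image Y, p a
      = (∑ i, p (Y i) / empProb Y (Y i)) / Fintype.card P := by
    rw [← sum_image_empProb_mul Y (fun a => p a / empProb Y a)]
    refine sum_congr rfl fun a ha => ?_
    obtain ⟨i, -, rfl⟩ := mem_image.1 ha
    field_simp [(empProb_pos Y i).ne']
  have hcard : (0 : ℝ) < Fintype.card P := Nat.cast_pos.2 Fintype.card_pos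
  calc 1 - ∑ a ∈ univ.image Y, p a
      = (∑ i, (1 - p (Y i) / empProb Y (Y i))) / Fintype.card P := by
        rw [hsum, sum_sub_distrib, sub_div, sum_const, card_univ, nsmul_one, div_self hcard.ne']
    _ ≤ (∑ i, log (empProb Y (Y i) / p (Y i))) / Fintype.card P := by
        gcongr with i
        have h := log_le_sub_one_of_pos (div_pos (hp i) (empProb_pos Y i))
        rw [log_div (hp i).ne' (empProb_pos Y i).ne'] at h
        rw [log_div (empProb_pos Y i).ne' (hp i).ne']
        linarith

end EmpiricalDistribution

section MutualInformation

variable {P A B : Type*} [Fintype P] [DecidableEq A] [DecidableEq B]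

noncomputable def empMutualInfo (F : P → A) (X : P → B) : ℝ :=
  empEntropy F + empEntropy X - empEntropy (fun i => (F i, X i))

theorem uncertaintyCoeff_eq_empMutualInfo_div (F : P → A) (X : P → B) :
    uncertaintyCoeff F X = empMutualInfo F X / empEntropy X := by
  rw [uncertaintyCoeff, empMutualInfo]
  ring_nf

theorem empMutualInfo_eq_sum_log_div (F : P → A) (X : P → B) :
    empMutualInfo F X
      = (∑ i, log (empProb (fun j => (F j, X j)) (F i, X i)
          / (empProb F (F i) * empProb X (X i)))) / Fintype.card P / log 2 := by
  have hlog : ∀ i, log (empProb (fun j => (F j, X j)) (F i, X i)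
        / (empProb F (F i) * empProb X (X i)))
      = log (empProb (fun j => (F j, X j)) (F i, X i))
        - log (empProb F (F i)) - log (empProb X (X i)) := fun i => by
    rw [log_div (empProb_pos _ i).ne' (mul_pos (empProb_pos F i) (empProb_pos X i)).ne',
      log_mul (empProb_pos F i).ne' (empProb_pos X i).ne', sub_sub]
  simp only [empMutualInfo, empEntropy_eq_neg_sum_logb_div, logb, hlog, sum_sub_distrib,
    ← sum_div]
  ring

theorem one_sub_sum_le_empMutualInfo [Nonempty P] (F : P → A) (X : P → B) :
    (1 - ∑ ab ∈ univ.image (fun i => (F i, X i)), empProb F ab.1 * empProb X ab.2) / log 2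
      ≤ empMutualInfo F X := by
  rw [empMutualInfo_eq_sum_log_div]
  gcongr
  exact one_sub_sum_le_sum_log_empProb_div (fun i => (F i, X i))
    (fun ab => empProb F ab.1 * empProb X ab.2)
    (fun i => mul_pos (empProb_pos F i) (empProb_pos X i))

theorem image_pair_eq_product_of_empMutualInfo_eq_zero [Nonempty P] {F : P → A} {X : P → B}
    (h : empMutualInfo F X = 0) :
    univ.image (fun i => (F i, X i)) = univ.image F ×ˢ univ.image X := by
  have hsub : univ.image (fun i => (F i, X i)) ⊆ univ.image F ×ˢ univ.image X := by
    intro ab hab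
    obtain ⟨i, -, rfl⟩ := mem_image.1 hab
    exact mem_product.2 ⟨mem_image_of_mem F (mem_univ i), mem_image_of_mem X (mem_univ i)⟩
  have hprod : ∑ ab ∈ univ.image F ×ˢ univ.image X, empProb F ab.1 * empProb X ab.2 = 1 := by
    rw [sum_product, ← sum_mul_sum, sum_image_empProb, sum_image_empProb, one_mul]
  have hjoint : 1 ≤ ∑ ab ∈ univ.image (fun i => (F i, X i)), empProb F ab.1 * empProb X ab.2 := by
    have := one_sub_sum_le_empMutualInfo F X
    rwa [h, div_le_iff₀ (log_pos one_lt_two), zero_mul, sub_nonpos] at this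
  refine eq_of_subset_of_sum_le_sum hsub (fun ⟨a, b⟩ hab => ?_) (hprod.trans_le hjoint)
  obtain ⟨ha, hb⟩ := mem_product.1 hab
  obtain ⟨i, -, rfl⟩ := mem_image.1 ha
  obtain ⟨j, -, rfl⟩ := mem_image.1 hb
  exact mul_pos (empProb_pos F i) (empProb_pos X j)

theorem disperse_eq_numBins_of_image_pair_eq_product [Nonempty P] {F : P → A} {X : P → B}
    (h : univ.image (fun i => (F i, X i)) = univ.image F ×ˢ univ.image X) :
    disperse F X = numBins X := by
  have hF : (numBins F : ℝ) ≠ 0 :=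
    Nat.cast_ne_zero.2 (card_ne_zero.2 (univ_nonempty.image F))
  rw [disperse, numBins, h, card_product, Nat.cast_mul, ← numBins, ← numBins,
    mul_div_cancel_left₀ _ hF]

end MutualInformation

/-- Lemma 2.2: `U(X|F) = 0 → Disperse(S, X, P) = |Range(X)|`. -/
theorem uncertainty_zero_implies_max_dispersal
    {P A B : Type*} [Fintype P] [Nonempty P] [DecidableEq A] [DecidableEq B]
    (F : P → A) (X : P → B) (hX : 0 < empEntropy X)
    (hU : uncertaintyCoeff F X = 0) :
    disperse F X = (numBins X : ℝ) := by
  rw [uncertaintyCoeff_eq_empMutualInfo_div, div_eq_zero_iff, or_iff_left hX.ne'] at hU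
  exact disperse_eq_numBins_of_image_pair_eq_product
    (image_pair_eq_product_of_empMutualInfo_eq_zero hU)
end
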